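/- Let 1 < p < ∞ and define q by 1/p + 1/q = 1. Let Γ ⊆ ℂ be Carleson with constant C and let z₀ ∈ ℂ \ Γ. Then the weight w(z) = |z − z₀|^{1 − 2/p} satisfies the Muckenhoupt A_p condition on Γ: there exists A < ∞ such that for all z ∈ Γ and all r > 0, ( (1/r) ∫_{Γ ∩ D(z,r)} |z' − z₀|^{p−2} dμ(z') )^{1/p} · ( (1/r) ∫_{Γ ∩ D(z,r)} |z' − z₀|^{q−2} dμ(z') )^{1/q} ≤ A. -/

import Mathlib

/-!
Measure distances from `z₀` at the scale `ρ = |z - z₀| + r`. If `|z - z₀| ≥ 2r`, the weight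
`|z' - z₀|^s` is comparable to `ρ^s` on `D(z, r)`, whose measure is at most `C r`. Otherwise
`D(z, r) ⊆ D(z₀, 3r)`, and summing the Carleson bound over the dyadic annuli around `z₀` gives
`∫_{Γ ∩ D(z₀, R)} |z' - z₀|^s dμ ≲ R^{s+1}` for `s > -1`. In both cases the average of
`|z' - z₀|^s` over the disk is `≲ ρ^s`, and as `(p - 2)/p + (q - 2)/q = 0` the powers of `ρ`
cancel in the `A_p` product.
-/

open MeasureTheory Metric Set Filter Topology
open scoped ENNReal

lemma rpow_le_rpow_abs_mul_rpow {a c t : ℝ} (s : ℝ) (ha : 0 < a) (hc : 1 ≤ c)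
    (hlow : a / c ≤ t) (hupp : t ≤ c * a) : t ^ s ≤ c ^ |s| * a ^ s := by
  rcases le_or_gt 0 s with hs | hs
  · calc t ^ s ≤ (c * a) ^ s :=
        Real.rpow_le_rpow ((div_pos ha (by linarith)).le.trans hlow) hupp hs
      _ = c ^ |s| * a ^ s := by rw [abs_of_nonneg hs, Real.mul_rpow (by linarith) ha.le]
  · calc t ^ s ≤ (a / c) ^ s := Real.rpow_le_rpow_of_nonpos (div_pos ha (by linarith)) hlow hs.le
      _ = c ^ |s| * a ^ s := by
        rw [abs_of_neg hs, Real.div_rpow ha.le (by linarith), Real.rpow_neg (by linarith)]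
        ring

lemma rpow_one_div_mul_rpow_one_div_le {p q ρ Kp Kq : ℝ} {Ip Iq : ℝ≥0∞} (hp : 0 < p)
    (hq : 0 < q) (hpq : 1 / p + 1 / q = 1) (hρ : 0 < ρ) (hKp : 0 ≤ Kp) (hKq : 0 ≤ Kq)
    (hIp : Ip ≤ ENNReal.ofReal (Kp * ρ ^ (p - 2)))
    (hIq : Iq ≤ ENNReal.ofReal (Kq * ρ ^ (q - 2))) :
    Ip ^ (1 / p) * Iq ^ (1 / q) ≤ ENNReal.ofReal (Kp ^ (1 / p) * Kq ^ (1 / q)) := by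
  have hcancel : ρ ^ ((p - 2) * (1 / p)) * ρ ^ ((q - 2) * (1 / q)) = 1 := by
    rw [← Real.rpow_add hρ, sub_mul, sub_mul, mul_one_div_cancel hp.ne',
      mul_one_div_cancel hq.ne', show 1 - 2 * (1 / p) + (1 - 2 * (1 / q)) = 0 by linarith,
      Real.rpow_zero]
  calc Ip ^ (1 / p) * Iq ^ (1 / q)
      ≤ ENNReal.ofReal (Kp * ρ ^ (p - 2)) ^ (1 / p) *
          ENNReal.ofReal (Kq * ρ ^ (q - 2)) ^ (1 / q) := by
        gcongr
    _ = ENNReal.ofReal ((Kp * ρ ^ (p - 2)) ^ (1 / p) * (Kq * ρ ^ (q - 2)) ^ (1 / q)) := by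
        rw [ENNReal.ofReal_rpow_of_nonneg (by positivity) (by positivity),
          ENNReal.ofReal_rpow_of_nonneg (by positivity) (by positivity),
          ← ENNReal.ofReal_mul (by positivity)]
    _ = ENNReal.ofReal (Kp ^ (1 / p) * Kq ^ (1 / q)) := by
        congr 1
        rw [Real.mul_rpow hKp (by positivity), Real.mul_rpow hKq (by positivity),
          ← Real.rpow_mul hρ.le, ← Real.rpow_mul hρ.le]
        linear_combination (Kp ^ (1 / p) * Kq ^ (1 / q)) * hcancel

section Carleson

variable {X : Type*} [MetricSpace X]

lemma ball_subset_insert_iUnion_closedBall_diff_ball (x₀ : X) (r : ℝ) :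
    ball x₀ r ⊆
      insert x₀ (⋃ k : ℕ, closedBall x₀ (r / 2 ^ k) \ ball x₀ (r / 2 ^ k / 2)) := by
  intro x hx
  rcases eq_or_ne x x₀ with rfl | hne
  · exact mem_insert _ _
  have hd : 0 < dist x x₀ := dist_pos.2 hne
  obtain ⟨k, hk, hk'⟩ :=
    exists_nat_pow_near ((one_le_div hd).2 (mem_ball.1 hx).le) (one_lt_two : (1 : ℝ) < 2)
  rw [le_div_iff₀ hd] at hk
  rw [div_lt_iff₀ hd] at hk'
  refine mem_insert_of_mem _ (mem_iUnion.2 ⟨k, ?_, ?_⟩)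
  · rw [mem_closedBall, le_div_iff₀ (by positivity)]
    linarith
  · rw [mem_ball, not_lt, div_div, ← pow_succ, div_le_iff₀ (by positivity)]
    linarith

variable [MeasurableSpace X]

def IsCarleson (ν : Measure X) (C : ℝ) : Prop :=
  ∀ (x : X) (r : ℝ), 0 < r → ν (ball x r) ≤ ENNReal.ofReal (C * r)

lemma setLIntegral_rpow_dist_le {ν : Measure X} {S : Set X} {x₀ : X} {a c m : ℝ} (s : ℝ)
    (ha : 0 < a) (hc : 1 ≤ c) (hS : ∀ x ∈ S, a / c ≤ dist x x₀ ∧ dist x x₀ ≤ c * a)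
    (hνS : ν S ≤ ENNReal.ofReal m) :
    ∫⁻ x in S, ENNReal.ofReal (dist x x₀ ^ s) ∂ν
      ≤ ENNReal.ofReal (c ^ |s| * a ^ s * m) := by
  have hca : 0 ≤ c ^ |s| * a ^ s :=
    mul_nonneg (Real.rpow_nonneg (by linarith) _) (Real.rpow_nonneg ha.le _)
  calc ∫⁻ x in S, ENNReal.ofReal (dist x x₀ ^ s) ∂ν
      ≤ ∫⁻ _ in S, ENNReal.ofReal (c ^ |s| * a ^ s) ∂ν :=
        setLIntegral_mono measurable_const fun x hx =>
          ENNReal.ofReal_le_ofReal (rpow_le_rpow_abs_mul_rpow s ha hc (hS x hx).1 (hS x hx).2)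
    _ = ENNReal.ofReal (c ^ |s| * a ^ s) * ν S := setLIntegral_const _ _
    _ ≤ ENNReal.ofReal (c ^ |s| * a ^ s) * ENNReal.ofReal m := by gcongr
    _ = ENNReal.ofReal (c ^ |s| * a ^ s * m) := (ENNReal.ofReal_mul hca).symm

namespace IsCarleson

variable {ν : Measure X} {C : ℝ}

lemma measure_singleton (hν : IsCarleson ν C) (x : X) : ν {x} = 0 := by
  have hlim : Tendsto (fun r : ℝ => ENNReal.ofReal (C * r)) (𝓝[>] 0) (𝓝 0) := by
    have : Tendsto (fun r : ℝ => C * r) (𝓝 0) (𝓝 0) := by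
      simpa using (tendsto_id (x := 𝓝 (0 : ℝ))).const_mul C
    simpa using (ENNReal.tendsto_ofReal this).mono_left nhdsWithin_le_nhds
  refine nonpos_iff_eq_zero.1 (ge_of_tendsto hlim ?_)
  filter_upwards [self_mem_nhdsWithin] with r hr
  exact (measure_mono (singleton_subset_iff.2 (mem_ball_self hr))).trans (hν x r hr)

lemma setLIntegral_closedBall_diff_ball_rpow_dist_le (hν : IsCarleson ν C) (x₀ : X) (s : ℝ)
    {a : ℝ} (ha : 0 < a) :
    ∫⁻ x in closedBall x₀ a \ ball x₀ (a / 2), ENNReal.ofReal (dist x x₀ ^ s) ∂ν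
      ≤ ENNReal.ofReal (2 ^ |s| * 2 * C * a ^ (s + 1)) := by
  have hsub : closedBall x₀ a \ ball x₀ (a / 2) ⊆ ball x₀ (2 * a) :=
    fun x hx => closedBall_subset_ball (by linarith) hx.1
  refine (setLIntegral_rpow_dist_le s ha one_le_two (fun x hx => ⟨?_, ?_⟩)
    ((measure_mono hsub).trans (hν _ _ (by positivity)))).trans_eq ?_
  · simpa using hx.2
  · linarith [mem_closedBall.1 hx.1]
  · rw [Real.rpow_add_one ha.ne']
    ring_nf

lemma lintegral_ball_rpow_dist_le (hν : IsCarleson ν C) (hC : 0 ≤ C) (x₀ : X) {s : ℝ}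
    (hs : -1 < s) :
    ∃ K, 0 ≤ K ∧ ∀ r, 0 < r →
      ∫⁻ x in ball x₀ r, ENNReal.ofReal (dist x x₀ ^ s) ∂ν
        ≤ ENNReal.ofReal (K * r ^ (s + 1)) := by
  set θ : ℝ := ((2 : ℝ) ^ (s + 1))⁻¹
  have hθ₀ : 0 ≤ θ := by positivity
  have hθ₁ : θ < 1 := inv_lt_one_of_one_lt₀ (Real.one_lt_rpow one_lt_two (by linarith))
  refine ⟨2 ^ |s| * 2 * C * (1 - θ)⁻¹,
    mul_nonneg (by positivity) (inv_nonneg.2 (by linarith)), fun r hr => ?_⟩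
  set f : X → ℝ≥0∞ := fun x => ENNReal.ofReal (dist x x₀ ^ s)
  set A : ℕ → Set X := fun k => closedBall x₀ (r / 2 ^ k) \ ball x₀ (r / 2 ^ k / 2)
  set B := 2 ^ |s| * 2 * C * r ^ (s + 1) with hB
  have hA (k : ℕ) : ∫⁻ x in A k, f x ∂ν ≤ ENNReal.ofReal (B * θ ^ k) := by
    refine (hν.setLIntegral_closedBall_diff_ball_rpow_dist_le x₀ s (by positivity)).trans_eq ?_
    rw [Real.div_rpow hr.le (by positivity), ← Real.rpow_natCast_mul (by norm_num),
      mul_comm (k : ℝ), Real.rpow_mul_natCast (by norm_num), hB, inv_pow]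
    ring_nf
  have hsummable : Summable fun k : ℕ => B * θ ^ k :=
    (summable_geometric_of_lt_one hθ₀ hθ₁).mul_left B
  calc ∫⁻ x in ball x₀ r, f x ∂ν
      ≤ ∫⁻ x in {x₀} ∪ ⋃ k, A k, f x ∂ν :=
        lintegral_mono_set (ball_subset_insert_iUnion_closedBall_diff_ball x₀ r)
    _ ≤ (∫⁻ x in {x₀}, f x ∂ν) + ∫⁻ x in ⋃ k, A k, f x ∂ν :=
        lintegral_union_le _ _ _
    _ ≤ ∑' k, ∫⁻ x in A k, f x ∂ν := by
        rw [setLIntegral_measure_zero _ _ (hν.measure_singleton x₀), zero_add]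
        exact lintegral_iUnion_le _ _
    _ ≤ ∑' k, ENNReal.ofReal (B * θ ^ k) := ENNReal.tsum_le_tsum hA
    _ = ENNReal.ofReal (∑' k, B * θ ^ k) :=
        (ENNReal.ofReal_tsum_of_nonneg (fun k => by positivity) hsummable).symm
    _ = ENNReal.ofReal (2 ^ |s| * 2 * C * (1 - θ)⁻¹ * r ^ (s + 1)) := by
        rw [tsum_mul_left, tsum_geometric_of_lt_one hθ₀ hθ₁, hB]
        ring_nf

lemma inv_mul_lintegral_ball_rpow_dist_le (hν : IsCarleson ν C) (hC : 0 ≤ C) (x₀ : X)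
    {s : ℝ} (hs : -1 < s) :
    ∃ K, 0 ≤ K ∧ ∀ (z : X) (r : ℝ), 0 < r →
      (ENNReal.ofReal r)⁻¹ * ∫⁻ x in ball z r, ENNReal.ofReal (dist x x₀ ^ s) ∂ν
        ≤ ENNReal.ofReal (K * (dist z x₀ + r) ^ s) := by
  obtain ⟨K₀, hK₀, hball⟩ := hν.lintegral_ball_rpow_dist_le hC x₀ hs
  refine ⟨3 ^ |s| * (C + 3 * K₀), by positivity, fun z r hr => ?_⟩
  rw [← ENNReal.div_eq_inv_mul]
  refine ENNReal.div_le_of_le_mul ?_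
  rw [← ENNReal.ofReal_mul' hr.le]
  set ρ := dist z x₀ + r with hρ_def
  have hρ : 0 < ρ := by positivity
  have hρs : 0 ≤ ρ ^ s := Real.rpow_nonneg hρ.le s
  rcases le_or_gt (2 * r) (dist z x₀) with hfar | hnear
  · calc ∫⁻ x in ball z r, ENNReal.ofReal (dist x x₀ ^ s) ∂ν
        ≤ ENNReal.ofReal (3 ^ |s| * ρ ^ s * (C * r)) := by
          refine setLIntegral_rpow_dist_le s hρ (by norm_num) (fun x hx => ⟨?_, ?_⟩)
            (hν z r hr)
          · linarith [dist_triangle z x x₀, dist_comm x z, mem_ball.1 hx]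
          · linarith [dist_triangle x z x₀, mem_ball.1 hx]
      _ ≤ ENNReal.ofReal (3 ^ |s| * (C + 3 * K₀) * ρ ^ s * r) := by
          gcongr ENNReal.ofReal ?_
          rw [show 3 ^ |s| * ρ ^ s * (C * r) = 3 ^ |s| * C * ρ ^ s * r by ring]
          gcongr
          linarith
  · have h3r : (3 * r) ^ s ≤ 3 ^ |s| * ρ ^ s :=
      rpow_le_rpow_abs_mul_rpow s hρ (by norm_num) (by linarith)
        (by linarith [dist_nonneg (x := z) (y := x₀)])
    calc ∫⁻ x in ball z r, ENNReal.ofReal (dist x x₀ ^ s) ∂ν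
        ≤ ∫⁻ x in ball x₀ (3 * r), ENNReal.ofReal (dist x x₀ ^ s) ∂ν :=
          lintegral_mono_set (ball_subset_ball' (by linarith))
      _ ≤ ENNReal.ofReal (K₀ * (3 * r) ^ (s + 1)) := hball _ (by positivity)
      _ ≤ ENNReal.ofReal (3 ^ |s| * (C + 3 * K₀) * ρ ^ s * r) := by
          gcongr ENNReal.ofReal ?_
          rw [Real.rpow_add_one (by positivity)]
          nlinarith [mul_le_mul_of_nonneg_left h3r hK₀, mul_nonneg (mul_nonneg
            (Real.rpow_nonneg (by norm_num : (0 : ℝ) ≤ 3) |s|) hC) hρs]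

end IsCarleson

end Carleson

theorem statement9_general (p q : ℝ) (hp : 1 < p) (hpq : 1 / p + 1 / q = 1)
    (Γ : Set ℂ) (C : ℝ) (hC : 0 < C)
    (hCar : ∀ (z : ℂ) (r : ℝ), 0 < r →
      μH[1] (Γ ∩ ball z r) ≤ ENNReal.ofReal (C * r))
    (z₀ : ℂ) :
    ∃ A : ℝ, ∀ z ∈ Γ, ∀ r : ℝ, 0 < r →
      ((ENNReal.ofReal r)⁻¹ *
          ∫⁻ z' in Γ ∩ ball z r,
            ENNReal.ofReal (‖z' - z₀‖ ^ (p - 2)) ∂(μH[1] : Measure ℂ)) ^ (1 / p) *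
        ((ENNReal.ofReal r)⁻¹ *
          ∫⁻ z' in Γ ∩ ball z r,
            ENNReal.ofReal (‖z' - z₀‖ ^ (q - 2)) ∂(μH[1] : Measure ℂ)) ^ (1 / q)
        ≤ ENNReal.ofReal A := by
  have hp₀ : 0 < p := by linarith
  have hq₀ : 0 < q := one_div_pos.1 (by linarith [(div_lt_one hp₀).2 hp])
  have hq : 1 < q := (div_lt_one hq₀).1 (by linarith [one_div_pos.2 hp₀])
  set ν := (μH[1] : Measure ℂ).restrict Γ
  have hν : IsCarleson ν C := fun z r hr => by
    rw [Measure.restrict_apply measurableSet_ball, inter_comm]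
    exact hCar z r hr
  obtain ⟨Kp, hKp, hIp⟩ :=
    hν.inv_mul_lintegral_ball_rpow_dist_le hC.le z₀ (by linarith : -1 < p - 2)
  obtain ⟨Kq, hKq, hIq⟩ :=
    hν.inv_mul_lintegral_ball_rpow_dist_le hC.le z₀ (by linarith : -1 < q - 2)
  refine ⟨Kp ^ (1 / p) * Kq ^ (1 / q), fun z _ r hr => ?_⟩
  have hrestrict (s : ℝ) :
      ∫⁻ z' in Γ ∩ ball z r, ENNReal.ofReal (‖z' - z₀‖ ^ s) ∂μH[1]
        = ∫⁻ z' in ball z r, ENNReal.ofReal (dist z' z₀ ^ s) ∂ν := by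
    rw [Measure.restrict_restrict measurableSet_ball, inter_comm]
    simp only [dist_eq_norm]
  rw [hrestrict, hrestrict]
  exact rpow_one_div_mul_rpow_one_div_le hp₀ hq₀ hpq (by positivity) hKp hKq
    (hIp z r hr) (hIq z r hr)

/-- Let `1 < p < ∞`, `1/p + 1/q = 1`, let `Γ ⊆ ℂ` be Carleson with
constant `C` and `z₀ ∉ Γ`. Then the weight `w(z) = |z - z₀|^{1 - 2/p}` satisfies
the Muckenhoupt `A_p` condition on `Γ`: there exists `A < ∞` such that for all
`z ∈ Γ` and `r > 0`,
`((1/r)∫_{Γ∩D(z,r)} |z'-z₀|^{p-2} dμ)^{1/p} · ((1/r)∫_{Γ∩D(z,r)} |z'-z₀|^{q-2} dμ)^{1/q} ≤ A`. -/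
theorem statement9 (p q : ℝ) (hp : 1 < p) (hpq : 1 / p + 1 / q = 1)
    (Γ : Set ℂ) (C : ℝ) (hC : 0 < C)
    (hCar : ∀ (z : ℂ) (r : ℝ), 0 < r →
      μH[1] (Γ ∩ ball z r) ≤ ENNReal.ofReal (C * r))
    (z₀ : ℂ) (hz₀ : z₀ ∉ Γ) :
    ∃ A : ℝ, ∀ z ∈ Γ, ∀ r : ℝ, 0 < r →
      ((ENNReal.ofReal r)⁻¹ *
          ∫⁻ z' in Γ ∩ ball z r,
            ENNReal.ofReal (‖z' - z₀‖ ^ (p - 2)) ∂(μH[1] : Measure ℂ)) ^ (1 / p) *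
        ((ENNReal.ofReal r)⁻¹ *
          ∫⁻ z' in Γ ∩ ball z r,
            ENNReal.ofReal (‖z' - z₀‖ ^ (q - 2)) ∂(μH[1] : Measure ℂ)) ^ (1 / q)
        ≤ ENNReal.ofReal A :=
  statement9_general p q hp hpq Γ C hC hCar z₀
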